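/- Suppose c_1 = 0 and that the complex roots r_1, r_2, …, r_k of P are pairwise distinct, with r_1 = r the principal root. Run the Zeroing Algorithm from real inputs β_1, …, β_k. If a_1, …, a_k are complex numbers such that q(1,t) = a_1 r_1^t + a_2 r_2^t + ⋯ + a_k r_k^t for all t ≥ 0, then a_1 = Q_0(r_1) / Π_{i=2}^{k} (r_1 − r_i). -/

import Mathlib

/-!
Every `Q t` has degree `< k`, and `Q (t + 1) ≡ X * Q t` modulo `P`, so
`Q t (r j) = r j ^ t * Q 0 (r j)` at every root. Put `f = ∏_{i ≠ 1} (X - r i)` and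
`R = ∑_{m < k} f_m Q_m`. The `X ^ (k - 1)` coefficient of `R` is
`∑_m f_m q(1, m) = ∑_i a_i f(r_i) = a_1 f(r_1)`. On the other hand `R (r j) = f (r j) * Q 0 (r j)`,
so `R` and `Q 0 (r 1) • f` agree at the `k` distinct roots; having degree `< k` they are equal,
and since `f` is monic of degree `k - 1` their `X ^ (k - 1)` coefficients give
`a_1 f(r_1) = Q 0 (r 1)`.
-/

open Polynomial Finset

namespace Polynomial

variable {R : Type*} [CommRing R]

/-- `q.coeff (k - 1)` is the paper's `q(1, t)`; subtracting it times the monic `P` of degree `k`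
kills the `X ^ k` coefficient of `X * q`. -/
noncomputable def zeroingStep (P : R[X]) (k : ℕ) (q : R[X]) : R[X] :=
  X * q - C (q.coeff (k - 1)) * P

theorem eval_zeroingStep_of_isRoot {P : R[X]} {x : R} (hx : P.IsRoot x) (k : ℕ) (q : R[X]) :
    (zeroingStep P k q).eval x = x * q.eval x := by
  simp [zeroingStep, hx.eq_zero]

theorem eval_iterate_zeroingStep_of_isRoot {P : R[X]} {x : R} (hx : P.IsRoot x) (k : ℕ)
    (q : R[X]) (t : ℕ) : ((zeroingStep P k)^[t] q).eval x = x ^ t * q.eval x := by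
  induction t with
  | zero => simp
  | succ t ih =>
    rw [Function.iterate_succ_apply', eval_zeroingStep_of_isRoot hx, ih, pow_succ', mul_assoc]

theorem degree_zeroingStep_lt {P : R[X]} {k : ℕ} (hP : P.Monic) (hPk : P.natDegree = k)
    (hk : 0 < k) {q : R[X]} (hq : q.degree < k) : (zeroingStep P k q).degree < k := by
  rw [degree_lt_iff_coeff_zero] at hq ⊢
  intro m hm
  obtain ⟨n, rfl⟩ : ∃ n, m = n + 1 := ⟨m - 1, by omega⟩
  rw [zeroingStep, coeff_sub, coeff_X_mul, coeff_C_mul]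
  rcases hm.eq_or_lt with rfl | hlt
  · rw [← hPk, hP.coeff_natDegree, hPk, Nat.add_sub_cancel, mul_one, sub_self]
  · rw [hq n (by omega), coeff_eq_zero_of_natDegree_lt (p := P) (by omega), mul_zero, sub_zero]

theorem degree_iterate_zeroingStep_lt {P : R[X]} {k : ℕ} (hP : P.Monic) (hPk : P.natDegree = k)
    (hk : 0 < k) {q : R[X]} (hq : q.degree < k) (t : ℕ) :
    ((zeroingStep P k)^[t] q).degree < k := by
  induction t with
  | zero => exact hq
  | succ t ih => rw [Function.iterate_succ_apply']; exact degree_zeroingStep_lt hP hPk hk ih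

theorem map_zeroingStep {S : Type*} [CommRing S] (f : R →+* S) (P : R[X]) (k : ℕ) (q : R[X]) :
    (zeroingStep P k q).map f = zeroingStep (P.map f) k (q.map f) := by
  simp [zeroingStep, coeff_map]

end Polynomial

section

variable {K ι : Type*} [Field K] {s : Finset ι} {r : ι → K}

theorem sum_range_coeff_mul_sum_pow {n : ℕ} {f : K[X]} (hf : f.natDegree < n) (a : ι → K) :
    ∑ m ∈ range n, f.coeff m * ∑ i ∈ s, a i * r i ^ m = ∑ i ∈ s, a i * f.eval (r i) := by
  simp only [mul_sum, eval_eq_sum_range' hf]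
  rw [sum_comm]
  exact sum_congr rfl fun i _ ↦ sum_congr rfl fun m _ ↦ by ring

variable [DecidableEq ι] {i₀ : ι}

theorem prod_erase_sub_ne_zero (hr : Set.InjOn r s) (hi₀ : i₀ ∈ s) :
    ∏ i ∈ s.erase i₀, (r i₀ - r i) ≠ 0 :=
  prod_ne_zero_iff.mpr fun _ hi ↦ sub_ne_zero.mpr fun h ↦
    (ne_of_mem_erase hi) (hr (mem_erase.mp hi).2 hi₀ h.symm)

theorem eq_eval_div_prod_of_coeff_eq_sum_pow (hr : Set.InjOn r s) (hi₀ : i₀ ∈ s)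
    (Q : ℕ → K[X]) (hdeg : ∀ t, (Q t).degree < #s)
    (heval : ∀ t, ∀ i ∈ s, (Q t).eval (r i) = r i ^ t * (Q 0).eval (r i))
    (a : ι → K) (ha : ∀ t, (Q t).coeff (#s - 1) = ∑ i ∈ s, a i * r i ^ t) :
    a i₀ = (Q 0).eval (r i₀) / ∏ i ∈ s.erase i₀, (r i₀ - r i) := by
  set f : K[X] := ∏ i ∈ s.erase i₀, (X - C (r i))
  have hf_monic : f.Monic := monic_prod_X_sub_C _ _
  have hf_eval_i₀ : f.eval (r i₀) = ∏ i ∈ s.erase i₀, (r i₀ - r i) := by simp [f, eval_prod]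
  have hf_eval : ∀ i ∈ s.erase i₀, f.eval (r i) = 0 := fun i hi ↦ by
    simp only [f, eval_prod]; exact prod_eq_zero hi (by simp)
  have hf_deg : f.natDegree = #s - 1 := by simp [f, card_erase_of_mem hi₀]
  have hs : 0 < #s := card_pos.mpr ⟨i₀, hi₀⟩
  set R : K[X] := ∑ m ∈ range #s, C (f.coeff m) * Q m
  have hR_coeff : R.coeff (#s - 1) = a i₀ * f.eval (r i₀) := by
    simp only [R, finsetSum_coeff, coeff_C_mul, ha]
    rw [sum_range_coeff_mul_sum_pow (by omega), ← sum_erase_add _ _ hi₀,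
      sum_eq_zero fun i hi ↦ by rw [hf_eval i hi, mul_zero], zero_add]
  have hR_eval : ∀ i ∈ s, R.eval (r i) = f.eval (r i) * (Q 0).eval (r i) := fun i hi ↦ by
    simp only [R, eval_finsetSum, eval_mul, eval_C]
    rw [eval_eq_sum_range' (n := #s) (by omega), sum_mul]
    exact sum_congr rfl fun m _ ↦ by rw [heval m i hi]; ring
  have hf_degree : f.degree < #s := by
    rw [degree_eq_natDegree hf_monic.ne_zero, hf_deg]
    exact_mod_cast Nat.sub_lt hs one_pos
  have hR_degree : R.degree < #s := by
    rw [← mem_degreeLT]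
    refine Submodule.sum_mem _ fun m _ ↦ ?_
    rw [C_mul']
    exact Submodule.smul_mem _ _ (mem_degreeLT.mpr (hdeg m))
  have hR : R = C ((Q 0).eval (r i₀)) * f := by
    refine eq_of_degrees_lt_of_eval_index_eq s hr hR_degree
      (by rw [C_mul']; exact (degree_smul_le _ _).trans_lt hf_degree) fun i hi ↦ ?_
    rw [hR_eval i hi, eval_mul, eval_C]
    by_cases h : i = i₀
    · rw [h, mul_comm]
    · rw [hf_eval i (mem_erase.mpr ⟨h, hi⟩), zero_mul, mul_zero]
  have hR_lead : R.coeff (#s - 1) = (Q 0).eval (r i₀) := by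
    rw [hR, coeff_C_mul, ← hf_deg, hf_monic.coeff_natDegree, mul_one]
  rw [eq_div_iff (prod_erase_sub_ne_zero hr hi₀), ← hf_eval_i₀, ← hR_coeff, hR_lead]

end

theorem degree_sum_C_mul_X_pow_sub_lt {R : Type*} [Semiring R] (k : ℕ) (β : ℕ → R) :
    (∑ n ∈ Icc 1 k, C (β n) * X ^ (k - n)).degree < (k : WithBot ℕ) := by
  rw [← mem_degreeLT]
  refine Submodule.sum_mem _ fun n hn ↦ mem_degreeLT.mpr ?_
  rw [C_mul_X_pow_eq_monomial]
  refine (degree_monomial_le _ _).trans_lt ?_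
  have := mem_Icc.mp hn
  exact_mod_cast (by omega : k - n < k)

theorem principal_coefficient_formula_general
    (k : ℕ) (hk : 2 ≤ k) (c : ℕ → ℕ)
    (Pr : Polynomial ℝ)
    (hPr : Pr = X ^ k - ∑ i ∈ Finset.Icc 1 k, C (c i : ℝ) * X ^ (k - i))
    (P : Polynomial ℂ)
    (hP : P = X ^ k - ∑ i ∈ Finset.Icc 1 k, C (c i : ℂ) * X ^ (k - i))
    (r : ℕ → ℂ) (hinj : Set.InjOn r ↑(Finset.Icc 1 k))
    (hfact : P = ∏ i ∈ Finset.Icc 1 k, (X - C (r i)))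
    (β : ℕ → ℝ)
    (Q : ℕ → Polynomial ℝ)
    (hQ0 : Q 0 = ∑ n ∈ Finset.Icc 1 k, C (β n) * X ^ (k - n))
    (hQt : ∀ t, 1 ≤ t → Q t = X * Q (t - 1) - C ((Q (t - 1)).coeff (k - 1)) * Pr)
    (a : ℕ → ℂ)
    (ha : ∀ t : ℕ, ((Q t).coeff (k - 1) : ℂ) = ∑ i ∈ Finset.Icc 1 k, a i * r i ^ t) :
    a 1 = ((Q 0).map (algebraMap ℝ ℂ)).eval (r 1) / ∏ i ∈ Finset.Icc 2 k, (r 1 - r i) := by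
  set Qc : ℕ → ℂ[X] := fun t ↦ (Q t).map (algebraMap ℝ ℂ)
  have hcard : #(Icc 1 k) = k := by simp
  have hQ : ∀ t, Q t = (zeroingStep Pr k)^[t] (Q 0) := by
    intro t
    induction t with
    | zero => rfl
    | succ t ih => rw [Function.iterate_succ_apply', ← ih, hQt (t + 1) (by omega)]; rfl
  have hPr_map : Pr.map (algebraMap ℝ ℂ) = P := by
    rw [hPr, hP]; simp [Polynomial.map_sum]
  have hQc : ∀ t, Qc t = (zeroingStep P k)^[t] (Qc 0) := fun t ↦ by
    simp only [Qc]
    rw [hQ t, ← hPr_map]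
    exact (Function.Semiconj.iterate_right (map_zeroingStep _ Pr k) t).eq (Q 0)
  have hroot : ∀ i ∈ Icc 1 k, P.IsRoot (r i) := fun i hi ↦ by
    rw [hfact, IsRoot, eval_prod]; exact prod_eq_zero hi (by simp)
  have hPk : P.natDegree = k := by rw [hfact, natDegree_finsetProd_X_sub_C_eq_card, hcard]
  have hmonic : P.Monic := hfact ▸ monic_prod_X_sub_C _ _
  have hdeg0 : (Qc 0).degree < k := by
    rw [degree_map, hQ0]; exact degree_sum_C_mul_X_pow_sub_lt k β
  have h := eq_eval_div_prod_of_coeff_eq_sum_pow hinj (i₀ := 1) (mem_Icc.mpr ⟨le_rfl, by omega⟩) Qc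
    (fun t ↦ by
      rw [hQc, hcard]; exact degree_iterate_zeroingStep_lt hmonic hPk (by omega) hdeg0 t)
    (fun t i hi ↦ by rw [hQc]; exact eval_iterate_zeroingStep_of_isRoot (hroot i hi) k _ t)
    a (fun t ↦ by rw [hcard, coeff_map, ← ha]; rfl)
  rwa [Icc_erase_left, ← Icc_add_one_left_eq_Ioc] at h

/-- Principal coefficient of `q(1,t)`: if the roots `r₁, …, r_k` of `P` are pairwise
distinct with `r₁ = r` the principal root, and `q(1,t) = a₁ r₁^t + ⋯ + a_k r_k^t`
for all `t ≥ 0`, then `a₁ = Q₀(r₁) / ∏_{i=2}^k (r₁ - rᵢ)`. -/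
theorem principal_coefficient_formula
    (k : ℕ) (hk : 2 ≤ k) (c : ℕ → ℕ) (hc1 : c 1 = 0) (hck : 0 < c k)
    (Pr : Polynomial ℝ)
    (hPr : Pr = X ^ k - ∑ i ∈ Finset.Icc 1 k, C (c i : ℝ) * X ^ (k - i))
    (P : Polynomial ℂ)
    (hP : P = X ^ k - ∑ i ∈ Finset.Icc 1 k, C (c i : ℂ) * X ^ (k - i))
    (r : ℕ → ℂ) (hinj : Set.InjOn r ↑(Finset.Icc 1 k))
    (hfact : P = ∏ i ∈ Finset.Icc 1 k, (X - C (r i)))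
    (ρ : ℝ) (hρ : 0 < ρ) (hρroot : P.IsRoot (ρ : ℂ))
    (huniq : ∀ s : ℝ, 0 < s → P.IsRoot (s : ℂ) → s = ρ)
    (hr1 : r 1 = (ρ : ℂ))
    (β : ℕ → ℝ)
    (Q : ℕ → Polynomial ℝ)
    (hQ0 : Q 0 = ∑ n ∈ Finset.Icc 1 k, C (β n) * X ^ (k - n))
    (hQt : ∀ t, 1 ≤ t → Q t = X * Q (t - 1) - C ((Q (t - 1)).coeff (k - 1)) * Pr)
    (a : ℕ → ℂ)
    (ha : ∀ t : ℕ, ((Q t).coeff (k - 1) : ℂ) = ∑ i ∈ Finset.Icc 1 k, a i * r i ^ t) :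
    a 1 = ((Q 0).map (algebraMap ℝ ℂ)).eval (r 1) / ∏ i ∈ Finset.Icc 2 k, (r 1 - r i) :=
  principal_coefficient_formula_general k hk c Pr hPr P hP r hinj hfact β Q hQ0 hQt a ha
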